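/- arXiv:2211.15863 — 5 statements merged into one kernel-verified Lean document; each statement's English description precedes it below -/
import Mathlib

section
/- Let k be a field, n ≥ 1 an integer, and λ ∈ k with λ² = 1. Let b : ℤ × ℤ → k satisfy b(j,k) = 0 whenever j ≤ 0 or k ≤ 0, and b(j−1, k−1) = λ · (b(j−1, k) + b(j, k−1)) for all 1 ≤ j, k ≤ n. Then b(j, n+1−j) = (−1)^{j+1} · b(1, n) for all 1 ≤ j ≤ n. -/
/-- The recurrence `b(j-1,k-1) = λ(b(j-1,k) + b(j,k-1))`, together with vanishing at
nonpositive indices, forces `b(j, n+1-j) = (-1)^(j+1) b(1, n)` on the antidiagonal. -/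
theorem recurrence_antidiagonal_values (K : Type*) [Field K]
    (n : ℤ) (hn : 1 ≤ n) (lam : K) (hlam : lam ^ 2 = 1)
    (b : ℤ → ℤ → K)
    (hzero : ∀ j k : ℤ, j ≤ 0 ∨ k ≤ 0 → b j k = 0)
    (hrec : ∀ j k : ℤ, 1 ≤ j → j ≤ n → 1 ≤ k → k ≤ n →
      b (j - 1) (k - 1) = lam * (b (j - 1) k + b j (k - 1))) :
    ∀ j : ℤ, 1 ≤ j → j ≤ n → b j (n + 1 - j) = (-1 : K) ^ (j + 1) * b 1 n := by
  have hlam0 : lam ≠ 0 := by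
    intro h; rw [h] at hlam; simp at hlam
  -- vanishing below the antidiagonal
  have hvan : ∀ j : ℤ, 0 ≤ j → ∀ k : ℤ, k ≤ n - j → b j k = 0 := by
    refine Int.le_induction ?_ ?_
    · intro k _; exact hzero 0 k (Or.inl le_rfl)
    · intro j hj ih k hk
      rcases le_or_gt k 0 with hk0 | hk0
      · exact hzero _ _ (Or.inr hk0)
      · have hk1 : 1 ≤ k := hk0
        have h1 : j + 1 ≤ n := by omega
        have h2 : k + 1 ≤ n := by omega
        have := hrec (j + 1) (k + 1) (by omega) h1 (by omega) h2
        simp only [add_sub_cancel_right] at this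
        have e1 : b j k = 0 := ih k (by omega)
        have e2 : b j (k + 1) = 0 := ih (k + 1) (by omega)
        rw [e1, e2, zero_add] at this
        rw [eq_comm, mul_eq_zero] at this
        exact this.resolve_left hlam0
  refine Int.le_induction ?_ ?_
  · intro _
    norm_num
  · intro j hj ih hjn
    have hjn' : j ≤ n := by omega
    have ihv := ih hjn'
    have h1 : 1 ≤ n + 1 - j := by omega
    have h2 : n + 1 - j ≤ n := by omega
    have hr := hrec (j + 1) (n + 1 - j) (by omega) hjn h1 h2
    simp only [add_sub_cancel_right] at hr
    have hz : b j (n + 1 - j - 1) = 0 := hvan j (by omega) _ (by omega)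
    rw [hz] at hr
    have hsum : b j (n + 1 - j) + b (j + 1) (n + 1 - j - 1) = 0 := by
      rcases mul_eq_zero.mp hr.symm with h | h
      · exact absurd h hlam0
      · exact h
    have key : b (j + 1) (n + 1 - (j + 1)) = - b j (n + 1 - j) := by
      have : n + 1 - (j + 1) = n + 1 - j - 1 := by ring
      rw [this]
      exact eq_neg_of_add_eq_zero_right hsum
    rw [key, ihv]
    have : (-1 : K) ^ (j + 1 + 1) = (-1 : K) ^ (j + 1) * (-1) := by
      rw [zpow_add₀ (by norm_num : (-1 : K) ≠ 0) (j + 1) 1, zpow_one]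
    rw [this]
    ring
end

section
/- Let k be a field, n ≥ 1 and r integers, λ, ε ∈ k with λ² = 1 and ε² = 1. Let b : ℤ × ℤ → k satisfy: (i) b(j,k) = 0 whenever j ≤ 0 or k ≤ 0; (ii) b(j−1, k−1) = λ(b(j−1,k) + b(j,k−1)) for all 1 ≤ j,k ≤ n; (iii) b(j,k) = ε·(−1)^r·(λ·b(k,j) + b(k, j−1)) for all 1 ≤ j,k ≤ n; (iv) b(1,n) ≠ 0. Then ε = λ·(−1)^{n+r+1}. -/
/-- If the pairing coefficients of an ε-form on `M_λ(ωⁿ)` are nondegenerate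
(`b(1,n) ≠ 0`), then `ε = λ·(-1)^(n+r+1)`. -/
theorem epsilon_determined_by_form (K : Type*) [Field K]
    (n : ℤ) (hn : 1 ≤ n) (r : ℤ)
    (lam eps : K) (hlam : lam ^ 2 = 1) (heps : eps ^ 2 = 1)
    (b : ℤ → ℤ → K)
    (hzero : ∀ j k : ℤ, j ≤ 0 ∨ k ≤ 0 → b j k = 0)
    (hrec : ∀ j k : ℤ, 1 ≤ j → j ≤ n → 1 ≤ k → k ≤ n →
      b (j - 1) (k - 1) = lam * (b (j - 1) k + b j (k - 1)))
    (hsym : ∀ j k : ℤ, 1 ≤ j → j ≤ n → 1 ≤ k → k ≤ n →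
      b j k = eps * (-1 : K) ^ r * (lam * b k j + b k (j - 1)))
    (hnd : b 1 n ≠ 0) :
    eps = lam * (-1 : K) ^ (n + r + 1) := by
  have hlne : lam ≠ 0 := by
    intro h; rw [h] at hlam; simp at hlam
  have hm1 : (-1 : K) ≠ 0 := by norm_num
  -- b j m = 0 whenever m ≤ n - j
  have hz : ∀ j : ℤ, 1 ≤ j → ∀ m : ℤ, m ≤ n - j → b j m = 0 := by
    refine Int.le_induction ?_ ?_
    · intro m hm
      rcases le_or_gt m 0 with h0 | h0
      · exact hzero 1 m (Or.inr h0)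
      · have h := hrec 1 (m + 1) le_rfl hn (by omega) (by omega)
        simp only [sub_self, add_sub_cancel_right] at h
        rw [hzero 0 m (Or.inl le_rfl), hzero 0 (m + 1) (Or.inl le_rfl), zero_add] at h
        rcases mul_eq_zero.mp h.symm with h' | h'
        · exact absurd h' hlne
        · exact h'
    · intro j hj IH m hm
      rcases le_or_gt m 0 with h0 | h0
      · exact hzero (j + 1) m (Or.inr h0)
      · have h := hrec (j + 1) (m + 1) (by omega) (by omega) (by omega) (by omega)
        simp only [add_sub_cancel_right] at h
        rw [IH m (by omega), IH (m + 1) (by omega), zero_add] at h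
        rcases mul_eq_zero.mp h.symm with h' | h'
        · exact absurd h' hlne
        · exact h'
  -- antidiagonal values
  have hc : ∀ j : ℤ, 1 ≤ j → j ≤ n → b j (n + 1 - j) = (-1 : K) ^ (j - 1) * b 1 n := by
    refine Int.le_induction ?_ ?_
    · intro _
      norm_num
    · intro j hj IH hjn
      have h := hrec (j + 1) (n + 1 - j) (by omega) (by omega) (by omega) (by omega)
      simp only [add_sub_cancel_right] at h
      have hnj : n + 1 - j - 1 = n - j := by ring
      rw [hnj] at h
      rw [hz j hj (n - j) le_rfl] at h
      have hIH := IH (by omega)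
      have hgoal : b (j + 1) (n - j) = -((-1 : K) ^ (j - 1) * b 1 n) := by
        have h2 : lam * (b j (n + 1 - j) + b (j + 1) (n - j)) = 0 := h.symm
        rcases mul_eq_zero.mp h2 with h' | h'
        · exact absurd h' hlne
        · rw [hIH] at h'
          linear_combination h'
      have he : n + 1 - (j + 1) = n - j := by ring
      rw [he, hgoal]
      have : (-1 : K) ^ (j + 1 - 1) = (-1 : K) ^ (j - 1) * (-1) := by
        rw [show j + 1 - 1 = (j - 1) + 1 by ring, zpow_add_one₀ hm1]
      rw [this]; ring
  have hbn1 : b n 1 = (-1 : K) ^ (n - 1) * b 1 n := by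
    have h := hc n hn le_rfl
    rwa [show n + 1 - n = (1 : ℤ) by ring] at h
  have h := hsym 1 n le_rfl hn hn le_rfl
  rw [show (1 : ℤ) - 1 = 0 by ring, hzero n 0 (Or.inr le_rfl), add_zero, hbn1] at h
  have h3 : (eps * lam * (-1 : K) ^ (r + (n - 1)) - 1) * b 1 n = 0 := by
    rw [zpow_add₀ hm1]
    linear_combination -h
  have key : eps * lam * (-1 : K) ^ (r + (n - 1)) = 1 := by
    rcases mul_eq_zero.mp h3 with h' | h'
    · linear_combination h'
    · exact absurd h' hnd
  have heq : eps = lam * (-1 : K) ^ (r + (n - 1)) := by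
    linear_combination lam * (-1 : K) ^ (r + (n - 1)) * heps - eps * key
  have hp : (-1 : K) ^ (n + r + 1) = (-1 : K) ^ (r + (n - 1)) := by
    rw [show n + r + 1 = (r + (n - 1)) + 2 by ring, zpow_add₀ hm1 (r + (n - 1)) 2]
    norm_num
  rw [heq, hp]
end

section
/- Let k be a field of characteristic not 2, n ≥ 3 and r integers, λ, ε ∈ k with λ² = 1 and ε² = 1. Let b : ℤ × ℤ → k satisfy: (i) b(j,k) = 0 whenever j ≤ 0 or k ≤ 0; (ii) b(j−1, k−1) = λ(b(j−1,k) + b(j,k−1)) for all 1 ≤ j,k ≤ n; (iii) b(j,k) = ε·(−1)^r·(λ·b(k,j) + b(k,j−1)) for all 1 ≤ j,k ≤ n. Then b(1, n) = 0. -/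
/-- For `n ≥ 3` (characteristic ≠ 2), the compatibility and symmetry equations for an
ε-form on `M_λ(ωⁿ)` force `b(1,n) = 0`, so no nondegenerate ε-form exists. -/
theorem no_epsilon_form_for_large_n (K : Type*) [Field K] (hchar : (2 : K) ≠ 0)
    (n : ℤ) (hn : 3 ≤ n) (r : ℤ)
    (lam eps : K) (hlam : lam ^ 2 = 1) (heps : eps ^ 2 = 1)
    (b : ℤ → ℤ → K)
    (hzero : ∀ j k : ℤ, j ≤ 0 ∨ k ≤ 0 → b j k = 0)
    (hrec : ∀ j k : ℤ, 1 ≤ j → j ≤ n → 1 ≤ k → k ≤ n →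
      b (j - 1) (k - 1) = lam * (b (j - 1) k + b j (k - 1)))
    (hsym : ∀ j k : ℤ, 1 ≤ j → j ≤ n → 1 ≤ k → k ≤ n →
      b j k = eps * (-1 : K) ^ r * (lam * b k j + b k (j - 1))) :
    b 1 n = 0 := by
  set c : K := eps * (-1 : K) ^ r with hc
  have hlam0 : lam ≠ 0 := by
    intro h
    rw [h] at hlam
    simp at hlam
  have hc2 : c * c = 1 := by
    have h1 : ((-1 : K)) ^ r * (-1 : K) ^ r = 1 := by
      rw [← zpow_add₀ (by norm_num : (-1 : K) ≠ 0)]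
      have h2 : r + r = 2 * r := by ring
      rw [h2, zpow_mul]
      norm_num
    calc c * c = (eps ^ 2) * ((-1 : K) ^ r * (-1 : K) ^ r) := by rw [hc]; ring
    _ = 1 := by rw [h1, heps]; ring
  have key : ∀ j k : ℤ, 1 ≤ j → j ≤ n → 1 ≤ k → k ≤ n → b (j - 1) (k - 1) = 0 := by
    intro j k hj1 hjn hk1 hkn
    have e1 := hsym j k hj1 hjn hk1 hkn
    have e2 := hsym k j hk1 hkn hj1 hjn
    have e3 : b k (j - 1) = c * (lam * b (j - 1) k + b (j - 1) (k - 1)) := by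
      rcases eq_or_lt_of_le hj1 with h | h
      · have z1 : b k (j - 1) = 0 := hzero _ _ (Or.inr (by omega))
        have z2 : b (j - 1) k = 0 := hzero _ _ (Or.inl (by omega))
        have z3 : b (j - 1) (k - 1) = 0 := hzero _ _ (Or.inl (by omega))
        rw [z1, z2, z3]; ring
      · exact hsym k (j - 1) hk1 hkn (by omega) (by omega)
    have e4 := hrec j k hj1 hjn hk1 hkn
    have h2 : (2 : K) * b (j - 1) (k - 1) = 0 := by
      linear_combination (-1 : K) * e1 - c * lam * e2 - c * e3 + e4 -
        (b j k * lam ^ 2 + lam * (b j (k - 1) + b (j - 1) k) + b (j - 1) (k - 1)) * hc2 -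
        (b j k) * hlam
    exact (mul_eq_zero.mp h2).resolve_left hchar
  have k1 : b 1 (n - 1) = 0 := by
    have := key 2 n (by omega) (by omega) (by omega) (by omega)
    norm_num at this
    exact this
  have k2 : b 2 (n - 1) = 0 := by
    have := key 3 n (by omega) hn (by omega) (by omega)
    norm_num at this
    exact this
  have e := hrec 2 n (by omega) (by omega) (by omega) (by omega)
  norm_num [k1, k2] at e
  rcases e with h | h
  · exact absurd h hlam0
  · exact h
end

section
/- Let k be a field, r ≥ 1, c = 2r, and λ ∈ k with λ² = 1. Define B : Fin c → Fin c → k by B(i, j) = (−1)^i if j = i + r (mod c) and 0 ≤ i < r; B(i, j) = (−1)^i·λ if j = i + r (mod c) and r ≤ i < c; and B(i, j) = 0 otherwise. Then B(j, i) = (−1)^r · λ · B(i, j) for all i, j. In particular, the bilinear form with Gram matrix B is symmetric if (−1)^r λ = 1 and skew-symmetric if (−1)^r λ = −1. -/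
/-- The Gram matrix `B` of the canonical form on the band module `M_λ(ω)` satisfies
`B(j,i) = (-1)^r · λ · B(i,j)`, i.e. it is an ε-form with `ε = (-1)^r λ`. -/
theorem band_form_is_epsilon_symmetric (K : Type*) [Field K]
    (r : ℕ) (hr : 1 ≤ r) (c : ℕ) (hc : c = 2 * r)
    (lam : K) (hlam : lam ^ 2 = 1)
    (B : Fin c → Fin c → K)
    (hB : ∀ i j : Fin c, B i j =
      if (j : ℕ) = ((i : ℕ) + r) % c then
        (if (i : ℕ) < r then (-1 : K) ^ (i : ℕ) else (-1 : K) ^ (i : ℕ) * lam)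
      else 0) :
    ∀ i j : Fin c, B j i = (-1 : K) ^ r * lam * B i j := by
  intro i j
  subst hc
  have hi := i.isLt
  have hj := j.isLt
  have hlam2 : lam * lam = 1 := by rw [← hlam]; ring
  have hrr : ((-1 : K) ^ r) * ((-1 : K) ^ r) = 1 := by
    rw [← pow_add, ← two_mul, pow_mul, neg_one_sq, one_pow]
  have hmod : ∀ a : ℕ, a < 2 * r →
      (a + r) % (2 * r) = if a < r then a + r else a - r := by
    intro a ha
    split_ifs with h
    · exact Nat.mod_eq_of_lt (by omega)
    · have heq : a + r = (a - r) + 1 * (2 * r) := by omega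
      rw [heq, Nat.add_mul_mod_self_right, Nat.mod_eq_of_lt (by omega)]
  rw [hB, hB, hmod _ hi, hmod _ hj]
  by_cases h1 : (i : ℕ) < r <;> by_cases h2 : (j : ℕ) < r
  · simp only [if_pos h1, if_pos h2]
    rw [if_neg (by omega), if_neg (by omega)]; ring
  · simp only [if_pos h1, if_neg h2]
    by_cases h3 : (j : ℕ) = (i : ℕ) + r
    · rw [if_pos (by omega), if_pos h3, h3, pow_add]; ring
    · rw [if_neg (by omega), if_neg h3]; ring
  · simp only [if_neg h1, if_pos h2]
    by_cases h3 : (i : ℕ) = (j : ℕ) + r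
    · rw [if_pos h3, if_pos (by omega), h3, pow_add]
      calc (-1 : K) ^ (j : ℕ)
          = (-1) ^ (j : ℕ) * (((-1 : K) ^ r * (-1) ^ r) * (lam * lam)) := by
            rw [hrr, hlam2]; ring
        _ = (-1) ^ r * lam * ((-1) ^ (j : ℕ) * (-1) ^ r * lam) := by ring
    · rw [if_neg h3, if_neg (by omega)]; ring
  · simp only [if_neg h1, if_neg h2]
    rw [if_neg (by omega), if_neg (by omega)]; ring
end

section
/- Let k be a field, λ ∈ k, and n ≥ 2. The sequence of k[X]-modules 0 → k[X]/(X−λ)^n → (k[X]/(X−λ)^{n−1}) ⊕ (k[X]/(X−λ)^{n+1}) → k[X]/(X−λ)^n → 0 is a short exact sequence, where the first map is x ↦ (π(x), μ(x)) with π the natural quotient map and μ induced by multiplication by (X−λ), and the second map is (u, v) ↦ μ(u) − π(v) with μ induced by multiplication by (X−λ) and π the natural quotient map. -/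
open Polynomial

/-- The sequence
`0 → k[X]/(X-λ)^n → k[X]/(X-λ)^(n-1) ⊕ k[X]/(X-λ)^(n+1) → k[X]/(X-λ)^n → 0`,
with first map `x ↦ (π x, μ x)` and second map `(u,v) ↦ μ u - π v` (`π` the quotient
maps, `μ` multiplication by `X-λ`), is a short exact sequence of `k[X]`-modules. -/
theorem jordan_block_almost_split_ses (K : Type*) [Field K] (lam : K) (n : ℕ) (hn : 2 ≤ n)
    (f : (K[X] ⧸ Ideal.span {(X - C lam) ^ n}) →ₗ[K[X]]
          (K[X] ⧸ Ideal.span {(X - C lam) ^ (n - 1)}) ×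
            (K[X] ⧸ Ideal.span {(X - C lam) ^ (n + 1)}))
    (hf : ∀ p : K[X],
      f (Ideal.Quotient.mk (Ideal.span {(X - C lam) ^ n}) p)
        = (Ideal.Quotient.mk (Ideal.span {(X - C lam) ^ (n - 1)}) p,
            Ideal.Quotient.mk (Ideal.span {(X - C lam) ^ (n + 1)}) ((X - C lam) * p)))
    (g : ((K[X] ⧸ Ideal.span {(X - C lam) ^ (n - 1)}) ×
            (K[X] ⧸ Ideal.span {(X - C lam) ^ (n + 1)})) →ₗ[K[X]]
          K[X] ⧸ Ideal.span {(X - C lam) ^ n})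
    (hg : ∀ p q : K[X],
      g (Ideal.Quotient.mk (Ideal.span {(X - C lam) ^ (n - 1)}) p,
          Ideal.Quotient.mk (Ideal.span {(X - C lam) ^ (n + 1)}) q)
        = Ideal.Quotient.mk (Ideal.span {(X - C lam) ^ n}) ((X - C lam) * p)
            - Ideal.Quotient.mk (Ideal.span {(X - C lam) ^ n}) q) :
    Function.Injective f ∧ Function.Exact f g ∧ Function.Surjective g := by
  set t : K[X] := X - C lam with ht
  have htne : t ≠ 0 := X_sub_C_ne_zero lam
  have hn1 : n - 1 + 1 = n := by omega
  refine ⟨?_, ?_, ?_⟩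
  · rw [injective_iff_map_eq_zero]
    intro a ha
    obtain ⟨p, rfl⟩ := Ideal.Quotient.mk_surjective a
    rw [hf] at ha
    have h2 : Ideal.Quotient.mk (Ideal.span {t ^ (n + 1)}) (t * p) = 0 :=
      congrArg Prod.snd ha
    rw [Ideal.Quotient.eq_zero_iff_mem, Ideal.mem_span_singleton, pow_succ'] at h2
    rw [Ideal.Quotient.eq_zero_iff_mem, Ideal.mem_span_singleton]
    exact (mul_dvd_mul_iff_left htne).mp h2
  · intro y
    obtain ⟨p, hp⟩ := Ideal.Quotient.mk_surjective y.1
    obtain ⟨q, hq⟩ := Ideal.Quotient.mk_surjective y.2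
    have hy : y = (Ideal.Quotient.mk (Ideal.span {t ^ (n - 1)}) p,
        Ideal.Quotient.mk (Ideal.span {t ^ (n + 1)}) q) := by
      rw [Prod.ext_iff]; exact ⟨hp.symm, hq.symm⟩
    constructor
    · intro h0
      rw [hy, hg] at h0
      rw [sub_eq_zero, Ideal.Quotient.eq, Ideal.mem_span_singleton] at h0
      obtain ⟨r, hr⟩ := h0
      refine ⟨Ideal.Quotient.mk _ (p - t ^ (n - 1) * r), ?_⟩
      rw [hf, hy]
      have h1 : Ideal.Quotient.mk (Ideal.span {t ^ (n - 1)}) (p - t ^ (n - 1) * r)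
          = Ideal.Quotient.mk (Ideal.span {t ^ (n - 1)}) p := by
        rw [Ideal.Quotient.eq, Ideal.mem_span_singleton]
        exact ⟨-r, by ring⟩
      have h2 : t * (p - t ^ (n - 1) * r) = q := by
        have : t * (t ^ (n - 1) * r) = t ^ n * r := by
          rw [← mul_assoc, ← pow_succ', hn1]
        rw [mul_sub, this]
        linear_combination hr
      rw [h2, h1]
    · rintro ⟨x, rfl⟩
      obtain ⟨s, rfl⟩ := Ideal.Quotient.mk_surjective x
      rw [hf, hg, sub_self]
  · intro y
    obtain ⟨q, hq⟩ := Ideal.Quotient.mk_surjective y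
    refine ⟨(Ideal.Quotient.mk _ 0, Ideal.Quotient.mk _ (-q)), ?_⟩
    rw [hg, ← hq]
    simp
end
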